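/- arXiv:2309.12128 — 2 statements merged into one kernel-verified Lean document; each statement's English description precedes it below -/
import Mathlib

section
/- Suppose the KL assumption holds with the Łojasiewicz desingularizing function ψ(s) = c·s^α for some c > 0 and α ∈ (0, 1/2), and L(y(0)) > 0. Set γ(t) := (σ_F²·σ₀²/4)·t + (c²α²/(1−2α))·L(y(0))^{2α−1}, so γ(t) > 0 for all t ≥ 0. Then for all t ≥ 0: L(y(t)) ≤ (((1−2α)/(α²c²))·γ(t))^{−1/(1−2α)}, and, with θ∞ := lim_{t→∞} θ(t), ‖θ(t) − θ∞‖ ≤ (2c/(σ₀·σ_F))·(((1−2α)/(α²c²))·γ(t))^{−α/(1−2α)}. -/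
/-!
Along the flow the loss `h t = L (y t)` decreases at rate `‖θ'‖² = ‖∇f (θ t)‖²`. As long as `θ`
stays in `B̄(θ₀, R)`, the Lipschitz bound on `J_g` keeps the smallest singular value of `J_g(θ)*`
above `σ₀ / 2`; together with the restricted injectivity of `J_F` and the KL inequality this gives
`‖∇f (θ t)‖ ≥ κ h^(1-α)` with `κ = σ₀ σ_F / (2cα)`. Hence `(h^α)' ≤ -κα ‖θ'‖`, so the length of the
path after time `a` is at most `h(a)^α / (κα)`: this keeps `θ` in the ball (as `R' < R`) and makes
it converge. Moreover `(h^(2α-1))' ≥ (1 - 2α) κ²`, which integrates to the rate for `h`, and through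
the length bound to the rate for `‖θ t - θ∞‖`.
-/

open Filter MeasureTheory ProbabilityTheory
open scoped Topology NNReal

noncomputable def sigmaMin {E F : Type*} [NormedAddCommGroup E] [InnerProductSpace ℝ E]
    [CompleteSpace E] [NormedAddCommGroup F] [InnerProductSpace ℝ F] [CompleteSpace F]
    (A : E →L[ℝ] F) : ℝ :=
  ⨅ w : {w : F // ‖w‖ = 1}, ‖ContinuousLinearMap.adjoint A w.1‖

open Set Metric InnerProductSpace ContinuousLinearMap

section Adjoint

variable {E F : Type*} [NormedAddCommGroup E] [InnerProductSpace ℝ E] [CompleteSpace E]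
  [NormedAddCommGroup F] [InnerProductSpace ℝ F] [CompleteSpace F]

theorem sigmaMin_nonneg (A : E →L[ℝ] F) : 0 ≤ sigmaMin A :=
  Real.iInf_nonneg fun _ => norm_nonneg _

theorem sigmaMin_mul_norm_le (A : E →L[ℝ] F) (w : F) : sigmaMin A * ‖w‖ ≤ ‖adjoint A w‖ := by
  rcases eq_or_ne w 0 with rfl | hw
  · simp
  have hw' : 0 < ‖w‖ := norm_pos_iff.mpr hw
  have hunit : ‖‖w‖⁻¹ • w‖ = 1 := by rw [norm_smul, norm_inv, norm_norm, inv_mul_cancel₀ hw'.ne']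
  have hle : sigmaMin A ≤ ‖w‖⁻¹ * ‖adjoint A w‖ := by
    rw [← norm_norm w, ← norm_inv, ← norm_smul, ← map_smul]
    exact ciInf_le ⟨0, by rintro _ ⟨_, rfl⟩; positivity⟩ (⟨_, hunit⟩ : {w : F // ‖w‖ = 1})
  rwa [← le_div_iff₀ hw', div_eq_inv_mul]

theorem sigmaMin_sub_norm_sub_mul_norm_le (A B : E →L[ℝ] F) (w : F) :
    (sigmaMin A - ‖A - B‖) * ‖w‖ ≤ ‖adjoint B w‖ := by
  have hAB : ‖adjoint A w - adjoint B w‖ ≤ ‖A - B‖ * ‖w‖ := by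
    rw [← sub_apply, ← map_sub, ← LinearIsometryEquiv.norm_map adjoint (A - B)]
    exact le_opNorm _ w
  have := norm_sub_norm_le (adjoint A w) (adjoint B w)
  linarith [sigmaMin_mul_norm_le A w]

theorem gradient_comp {G : E → F} {L : F → ℝ} {q : E} (hL : DifferentiableAt ℝ L (G q))
    (hG : DifferentiableAt ℝ G q) :
    gradient (L ∘ G) q = adjoint (fderiv ℝ G q) (gradient L (G q)) := by
  refine ext_inner_right ℝ fun v => ?_
  rw [adjoint_inner_left, gradient, toDual_symm_apply, gradient, toDual_symm_apply,
    fderiv_comp q hL hG]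
  rfl

end Adjoint

theorem le_rpow_sub_one_mul_of_mul_rpow_le {κ α x y : ℝ} (hx : 0 < x)
    (h : κ * x ^ (1 - α) ≤ y) : κ ≤ x ^ (α - 1) * y := by
  have hinv : x ^ (1 - α) * x ^ (α - 1) = 1 := by
    rw [← Real.rpow_add hx, sub_add_sub_cancel', sub_self, Real.rpow_zero]
  calc κ = κ * x ^ (1 - α) * x ^ (α - 1) := by rw [mul_assoc, hinv, mul_one]
    _ ≤ y * x ^ (α - 1) := by gcongr
    _ = x ^ (α - 1) * y := mul_comm _ _

theorem sq_le_rpow_mul_sq_of_mul_rpow_le {κ α x y : ℝ} (hx : 0 < x) (hκ : 0 ≤ κ)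
    (h : κ * x ^ (1 - α) ≤ y) : κ ^ 2 ≤ x ^ (2 * α - 2) * y ^ 2 := calc
  κ ^ 2 ≤ (x ^ (α - 1) * y) ^ 2 := pow_le_pow_left₀ hκ (le_rpow_sub_one_mul_of_mul_rpow_le hx h) 2
  _ = x ^ (2 * α - 2) * y ^ 2 := by
    rw [mul_pow, ← Real.rpow_natCast (x ^ (α - 1)), ← Real.rpow_mul hx.le]
    congr 2
    push_cast
    ring

theorem exists_tendsto_of_norm_sub_le_sub {E : Type*} [NormedAddCommGroup E] [CompleteSpace E]
    {θ : ℝ → E} {G : ℝ → ℝ} (hG : Tendsto G atTop (𝓝 0))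
    (hθ : ∀ a b, 0 ≤ a → a ≤ b → ‖θ b - θ a‖ ≤ G a - G b) :
    ∃ θlim, Tendsto θ atTop (𝓝 θlim) ∧ ∀ t ≥ 0, ‖θ t - θlim‖ ≤ G t := by
  have hcauchy : CauchySeq θ := by
    refine Metric.cauchySeq_iff'.2 fun ε hε => ?_
    obtain ⟨N, hN⟩ := Metric.tendsto_atTop.1 hG (ε / 2) (half_pos hε)
    refine ⟨max N 0, fun n hn => ?_⟩
    have h1 := hN n ((le_max_left _ _).trans hn)
    have h2 := hN (max N 0) (le_max_left _ _)
    rw [Real.dist_eq, sub_zero, abs_lt] at h1 h2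
    rw [dist_eq_norm]
    linarith [hθ (max N 0) n (le_max_right _ _) hn]
  obtain ⟨θlim, hlim⟩ := cauchySeq_tendsto_of_complete hcauchy
  refine ⟨θlim, hlim, fun t ht => ?_⟩
  have hle := le_of_tendsto_of_tendsto ((tendsto_const_nhds (x := θ t)).sub hlim).norm
    ((tendsto_const_nhds (x := G t)).sub hG)
    ((eventually_ge_atTop t).mono fun s hs => (norm_sub_rev _ _).trans_le (hθ t s ht hs))
  rwa [sub_zero] at hle

structure IsDissipativeCurve {E : Type*} [NormedAddCommGroup E] [NormedSpace ℝ E]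
    (θ v : ℝ → E) (h : ℝ → ℝ) : Prop where
  hasDerivAt : ∀ t ≥ 0, HasDerivAt θ (v t) t
  hasDerivAt_energy : ∀ t ≥ 0, HasDerivAt h (-‖v t‖ ^ 2) t
  energy_nonneg : ∀ t, 0 ≤ h t

theorem IsDissipativeCurve.of_gradient_flow {E : Type*} [NormedAddCommGroup E]
    [InnerProductSpace ℝ E] [CompleteSpace E] {f : E → ℝ} {θ θ' : ℝ → E}
    (hf : Differentiable ℝ f) (hf_nonneg : ∀ x, 0 ≤ f x)
    (hθ : ∀ t ≥ 0, HasDerivAt θ (θ' t) t) (hflow : ∀ t ≥ 0, θ' t = -gradient f (θ t)) :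
    IsDissipativeCurve θ θ' (f ∘ θ) where
  hasDerivAt := hθ
  hasDerivAt_energy t ht := by
    have hgrad : gradient f (θ t) = -θ' t := by rw [hflow t ht, neg_neg]
    refine ((hf (θ t)).hasFDerivAt.comp_hasDerivAt t (hθ t ht)).congr_deriv ?_
    rw [← toDual_symm_apply, ← gradient, hgrad, inner_neg_left, real_inner_self_eq_norm_sq]
  energy_nonneg t := hf_nonneg (θ t)

namespace IsDissipativeCurve

variable {E : Type*} [NormedAddCommGroup E] [NormedSpace ℝ E] {θ v : ℝ → E} {h : ℝ → ℝ}
  {κ α : ℝ}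

theorem continuousOn (hc : IsDissipativeCurve θ v h) : ContinuousOn θ (Ici 0) :=
  fun t ht => (hc.hasDerivAt t ht).continuousAt.continuousWithinAt

theorem continuousOn_energy (hc : IsDissipativeCurve θ v h) : ContinuousOn h (Ici 0) :=
  fun t ht => (hc.hasDerivAt_energy t ht).continuousAt.continuousWithinAt

theorem antitoneOn (hc : IsDissipativeCurve θ v h) : AntitoneOn h (Ici 0) :=
  antitoneOn_of_hasDerivWithinAt_nonpos (convex_Ici 0) hc.continuousOn_energy
    (fun t ht => (hc.hasDerivAt_energy t (interior_subset ht)).hasDerivWithinAt)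
    (fun _ _ => neg_nonpos.mpr (sq_nonneg _))

theorem velocity_eq_zero (hc : IsDissipativeCurve θ v h) {t : ℝ} (ht : 0 ≤ t) (h0 : h t = 0) :
    v t = 0 := by
  have hmin : IsLocalMin h t := Eventually.of_forall fun s => h0 ▸ hc.energy_nonneg s
  simpa using hmin.hasDerivAt_eq_zero (hc.hasDerivAt_energy t ht)

theorem hasDerivWithinAt_energy_rpow (hc : IsDissipativeCurve θ v h) (hα : 0 < α) {t : ℝ}
    (ht : 0 ≤ t) :
    HasDerivWithinAt (fun s => h s ^ α) (-(α * h t ^ (α - 1) * ‖v t‖ ^ 2)) (Ici t) t := by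
  rcases (hc.energy_nonneg t).eq_or_lt with h0 | hpos
  · -- once the energy vanishes it stays zero, so `h ^ α` is constant to the right of `t`
    have hzero : ∀ s ∈ Ici t, h s ^ α = 0 := fun s hs => by
      rw [le_antisymm (h0 ▸ hc.antitoneOn ht (ht.trans hs) hs) (hc.energy_nonneg s),
        Real.zero_rpow hα.ne']
    rw [hc.velocity_eq_zero ht h0.symm, norm_zero]
    simpa using (hasDerivWithinAt_const t (Ici t) (0 : ℝ)).congr hzero (hzero t self_mem_Ici)
  · exact ((hc.hasDerivAt_energy t ht).rpow_const (Or.inl hpos.ne')).hasDerivWithinAt.congr_deriv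
      (by ring)

theorem norm_velocity_le (hc : IsDissipativeCurve θ v h) (hκ : 0 < κ) {t : ℝ} (ht : 0 ≤ t)
    (hŁ : 0 < h t → κ * h t ^ (1 - α) ≤ ‖v t‖) :
    ‖v t‖ ≤ κ⁻¹ * (h t ^ (α - 1) * ‖v t‖ ^ 2) := by
  rcases (hc.energy_nonneg t).eq_or_lt with h0 | hpos
  · simp [hc.velocity_eq_zero ht h0.symm]
  · rw [le_inv_mul_iff₀ hκ, sq, ← mul_assoc]
    exact mul_le_mul_of_nonneg_right (le_rpow_sub_one_mul_of_mul_rpow_le hpos (hŁ hpos))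
      (norm_nonneg _)

theorem norm_sub_le_of_lojasiewicz (hc : IsDissipativeCurve θ v h) (hκ : 0 < κ) (hα : 0 < α)
    {a b : ℝ} (ha : 0 ≤ a) (hab : a ≤ b)
    (hŁ : ∀ t ∈ Ico a b, 0 < h t → κ * h t ^ (1 - α) ≤ ‖v t‖) :
    ‖θ b - θ a‖ ≤ (κ * α)⁻¹ * h a ^ α - (κ * α)⁻¹ * h b ^ α := by
  have hsub : Icc a b ⊆ Ici 0 := fun s hs => ha.trans hs.1
  refine image_norm_le_of_norm_deriv_right_le_deriv_boundary'
    (f := fun s => θ s - θ a) (B' := fun t => (κ * α)⁻¹ * (α * h t ^ (α - 1) * ‖v t‖ ^ 2))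
    ((hc.continuousOn.mono hsub).sub continuousOn_const)
    (fun t ht => ((hc.hasDerivAt t (ha.trans ht.1)).sub_const _).hasDerivWithinAt)
    (by simp) (continuousOn_const.sub (continuousOn_const.mul
      ((hc.continuousOn_energy.mono hsub).rpow_const fun _ _ => Or.inr hα.le)))
    (fun t ht => ((hc.hasDerivWithinAt_energy_rpow hα (ha.trans ht.1)).const_mul _).const_sub _
      |>.congr_deriv (by ring))
    (fun t ht => ?_) ⟨hab, le_rfl⟩
  calc ‖v t‖ ≤ κ⁻¹ * (h t ^ (α - 1) * ‖v t‖ ^ 2) :=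
        hc.norm_velocity_le hκ (ha.trans ht.1) (hŁ t ht)
    _ = _ := by field_simp

-- At the first exit time from the ball the length bound would already be violated.
theorem mem_closedBall_of_lojasiewicz (hc : IsDissipativeCurve θ v h) (hκ : 0 < κ) (hα : 0 < α)
    {R : ℝ} (hŁ : ∀ t ≥ 0, θ t ∈ closedBall (θ 0) R → 0 < h t → κ * h t ^ (1 - α) ≤ ‖v t‖)
    (hR : (κ * α)⁻¹ * h 0 ^ α < R) {t : ℝ} (ht : 0 ≤ t) : θ t ∈ closedBall (θ 0) R := by
  by_contra hout
  rw [mem_closedBall, dist_eq_norm, not_le] at hout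
  set A := Ici 0 ∩ (fun s => ‖θ s - θ 0‖) ⁻¹' Ici R
  have hA : IsClosed A :=
    (hc.continuousOn.sub continuousOn_const).norm.preimage_isClosed_of_isClosed isClosed_Ici
      isClosed_Ici
  have hAbdd : BddBelow A := ⟨0, fun s hs => hs.1⟩
  obtain ⟨hT, hTR⟩ := hA.csInf_mem ⟨t, ht, hout.le⟩ hAbdd
  have hbefore : ∀ s ∈ Ico 0 (sInf A), θ s ∈ closedBall (θ 0) R := fun s hs => by
    by_contra hs'
    rw [mem_closedBall, dist_eq_norm, not_le] at hs'
    exact (csInf_le hAbdd ⟨hs.1, hs'.le⟩).not_gt hs.2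
  have hlen := hc.norm_sub_le_of_lojasiewicz hκ hα le_rfl hT
    fun s hs => hŁ s hs.1 (hbefore s hs)
  have : 0 ≤ (κ * α)⁻¹ * h (sInf A) ^ α := by
    have := hc.energy_nonneg (sInf A)
    positivity
  rw [mem_preimage, mem_Ici] at hTR
  linarith

theorem rpow_add_le_energy_rpow_of_lojasiewicz (hc : IsDissipativeCurve θ v h) (hκ : 0 < κ)
    (hα : α < 1 / 2) (hŁ : ∀ t ≥ 0, 0 < h t → κ * h t ^ (1 - α) ≤ ‖v t‖) {t : ℝ} (ht : 0 ≤ t)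
    (hpos : 0 < h t) : h 0 ^ (2 * α - 1) + (1 - 2 * α) * κ ^ 2 * t ≤ h t ^ (2 * α - 1) := by
  have h2α : 0 < 1 - 2 * α := by linarith
  have hposI : ∀ s ∈ Icc 0 t, 0 < h s := fun s hs =>
    hpos.trans_le (hc.antitoneOn hs.1 ht hs.2)
  have hmono : MonotoneOn (fun s => h s ^ (2 * α - 1) - (1 - 2 * α) * κ ^ 2 * s) (Icc 0 t) := by
    refine monotoneOn_of_hasDerivWithinAt_nonneg (convex_Icc 0 t)
      (f' := fun s => (1 - 2 * α) * (h s ^ (2 * α - 2) * ‖v s‖ ^ 2 - κ ^ 2)) ?_ ?_ ?_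
    · exact ((hc.continuousOn_energy.mono fun s hs => hs.1).rpow_const
        fun s hs => Or.inl (hposI s hs).ne').sub (continuous_const.mul continuous_id).continuousOn
    · intro s hs
      rw [interior_Icc] at hs
      have hd := (hc.hasDerivAt_energy s hs.1.le).rpow_const (p := 2 * α - 1)
        (Or.inl (hposI s (Ioo_subset_Icc_self hs)).ne')
      refine ((hd.sub ((hasDerivAt_id s).const_mul _)).congr_deriv ?_).hasDerivWithinAt
      rw [show 2 * α - 1 - 1 = 2 * α - 2 by ring]
      ring
    · intro s hs
      rw [interior_Icc] at hs
      have hps := hposI s (Ioo_subset_Icc_self hs)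
      have := sub_nonneg.mpr (sq_le_rpow_mul_sq_of_mul_rpow_le hps hκ.le (hŁ s hs.1.le hps))
      positivity
  have hgrowth := hmono (left_mem_Icc.mpr ht) (right_mem_Icc.mpr ht) ht
  simp only [mul_zero, sub_zero] at hgrowth
  linarith

theorem energy_le_of_lojasiewicz (hc : IsDissipativeCurve θ v h) (hκ : 0 < κ) (hα : α < 1 / 2)
    (hŁ : ∀ t ≥ 0, 0 < h t → κ * h t ^ (1 - α) ≤ ‖v t‖) {t : ℝ} (ht : 0 ≤ t) :
    h t ≤ (h 0 ^ (2 * α - 1) + (1 - 2 * α) * κ ^ 2 * t) ^ (-(1 / (1 - 2 * α))) := by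
  have h2α : 0 < 1 - 2 * α := by linarith
  rcases (hc.energy_nonneg t).eq_or_lt with h0 | hpos
  · rw [← h0]
    have := hc.energy_nonneg 0
    positivity
  have hX : 0 < h 0 ^ (2 * α - 1) + (1 - 2 * α) * κ ^ 2 * t := by
    have := hpos.trans_le (hc.antitoneOn self_mem_Ici ht ht)
    positivity
  calc h t = (h t ^ (2 * α - 1)) ^ (-(1 / (1 - 2 * α))) := by
        rw [← Real.rpow_mul hpos.le, show (2 * α - 1) * -(1 / (1 - 2 * α)) = 1 by
          field_simp; ring, Real.rpow_one]
    _ ≤ _ := Real.rpow_le_rpow_of_nonpos hX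
      (hc.rpow_add_le_energy_rpow_of_lojasiewicz hκ hα hŁ ht hpos)
      (by simp only [neg_nonpos]; positivity)

theorem exists_tendsto_of_lojasiewicz [CompleteSpace E] (hc : IsDissipativeCurve θ v h)
    (hκ : 0 < κ) (hα₀ : 0 < α) (hα : α < 1 / 2)
    (hŁ : ∀ t ≥ 0, 0 < h t → κ * h t ^ (1 - α) ≤ ‖v t‖) :
    ∃ θlim, Tendsto θ atTop (𝓝 θlim) ∧ ∀ t ≥ 0, ‖θ t - θlim‖ ≤
      (κ * α)⁻¹ * (h 0 ^ (2 * α - 1) + (1 - 2 * α) * κ ^ 2 * t) ^ (-(α / (1 - 2 * α))) := by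
  have h2α : 0 < 1 - 2 * α := by linarith
  have hX : Tendsto (fun t => h 0 ^ (2 * α - 1) + (1 - 2 * α) * κ ^ 2 * t) atTop atTop :=
    tendsto_atTop_add_const_left _ _ (tendsto_id.const_mul_atTop (by positivity))
  have hh : Tendsto h atTop (𝓝 0) :=
    tendsto_of_tendsto_of_tendsto_of_le_of_le' tendsto_const_nhds
      ((tendsto_rpow_neg_atTop (by positivity)).comp hX)
      (Eventually.of_forall hc.energy_nonneg)
      ((eventually_ge_atTop 0).mono fun t ht => hc.energy_le_of_lojasiewicz hκ hα hŁ ht)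
  have hG : Tendsto (fun t => (κ * α)⁻¹ * h t ^ α) atTop (𝓝 0) := by
    simpa [Real.zero_rpow hα₀.ne'] using
      ((Real.continuousAt_rpow_const 0 α (Or.inr hα₀.le)).tendsto.comp hh).const_mul (κ * α)⁻¹
  obtain ⟨θlim, hlim, hdist⟩ := exists_tendsto_of_norm_sub_le_sub hG fun a b ha hab =>
    hc.norm_sub_le_of_lojasiewicz hκ hα₀ ha hab fun t ht => hŁ t (ha.trans ht.1)
  refine ⟨θlim, hlim, fun t ht => (hdist t ht).trans ?_⟩
  have hX₀ : 0 ≤ h 0 ^ (2 * α - 1) + (1 - 2 * α) * κ ^ 2 * t := by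
    have := Real.rpow_nonneg (hc.energy_nonneg 0) (2 * α - 1)
    positivity
  rw [show -(α / (1 - 2 * α)) = -(1 / (1 - 2 * α)) * α by ring, Real.rpow_mul hX₀]
  gcongr
  · exact hc.energy_nonneg t
  · exact hc.energy_le_of_lojasiewicz hκ hα hŁ ht

end IsDissipativeCurve

theorem mul_rpow_le_norm_gradient_comp_of_mem_closedBall {E₁ E₂ E₃ : Type*}
    [NormedAddCommGroup E₁] [InnerProductSpace ℝ E₁] [CompleteSpace E₁]
    [NormedAddCommGroup E₂] [InnerProductSpace ℝ E₂] [CompleteSpace E₂]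
    [NormedAddCommGroup E₃] [InnerProductSpace ℝ E₃] [CompleteSpace E₃]
    {L : E₃ → ℝ} {F : E₂ → E₃} {g : E₁ → E₂} {q₀ : E₁} {c α σF R r₀ : ℝ}
    (hL : Differentiable ℝ L) (hF : Differentiable ℝ F) (hg : Differentiable ℝ g)
    (hc : 0 < c) (hα : 0 < α) (hσF : 0 ≤ σF) (hR : 0 < R)
    (hKL : ∀ v, 0 < L v → L v < r₀ → 1 ≤ c * α * L v ^ (α - 1) * ‖gradient L v‖)
    (hinj : ∀ q ∈ closedBall q₀ R,
      gradient L (F (g q)) ∈ LinearMap.range (fderiv ℝ F (g q) : E₂ →ₗ[ℝ] E₃) ∧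
      ∀ z ∈ LinearMap.range (fderiv ℝ F (g q) : E₂ →ₗ[ℝ] E₃),
        σF * ‖z‖ ≤ ‖adjoint (fderiv ℝ F (g q)) z‖)
    (hLip : ∀ a ∈ closedBall q₀ R, ∀ b ∈ closedBall q₀ R,
      ‖fderiv ℝ g a - fderiv ℝ g b‖ ≤ sigmaMin (fderiv ℝ g q₀) / (2 * R) * ‖a - b‖)
    {q : E₁} (hq : q ∈ closedBall q₀ R) (hpos : 0 < L (F (g q))) (hr₀ : L (F (g q)) < r₀) :
    sigmaMin (fderiv ℝ g q₀) * σF / (2 * c * α) * L (F (g q)) ^ (1 - α) ≤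
      ‖gradient (fun q => L (F (g q))) q‖ := by
  set σ₀ := sigmaMin (fderiv ℝ g q₀)
  set w := gradient L (F (g q))
  have hσ₀ : 0 ≤ σ₀ := sigmaMin_nonneg _
  have hg_near : ‖fderiv ℝ g q₀ - fderiv ℝ g q‖ ≤ σ₀ / 2 := calc
    _ ≤ σ₀ / (2 * R) * ‖q₀ - q‖ := hLip _ (mem_closedBall_self hR.le) _ hq
    _ ≤ σ₀ / (2 * R) * R := by rw [← dist_eq_norm, dist_comm]; gcongr; exact hq
    _ = σ₀ / 2 := by field_simp
  have hF_inj : σF * ‖w‖ ≤ ‖adjoint (fderiv ℝ F (g q)) w‖ := (hinj q hq).2 w (hinj q hq).1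
  have hgrad : gradient (fun q => L (F (g q))) q =
      adjoint (fderiv ℝ g q) (adjoint (fderiv ℝ F (g q)) w) := by
    change gradient (L ∘ F ∘ g) q = _
    rw [gradient_comp (G := F ∘ g) (hL _) ((hF _).comp q (hg q)), fderiv_comp q (hF _) (hg q),
      adjoint_comp, comp_apply]
    rfl
  have hKL' : L (F (g q)) ^ (1 - α) ≤ c * α * ‖w‖ := calc
    L (F (g q)) ^ (1 - α) ≤ L (F (g q)) ^ (1 - α) * (c * α * L (F (g q)) ^ (α - 1) * ‖w‖) :=
      le_mul_of_one_le_right (by positivity) (hKL _ hpos hr₀)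
    _ = c * α * ‖w‖ * (L (F (g q)) ^ (1 - α) * L (F (g q)) ^ (α - 1)) := by ring
    _ = c * α * ‖w‖ := by
      rw [← Real.rpow_add hpos, sub_add_sub_cancel', sub_self, Real.rpow_zero, mul_one]
  calc σ₀ * σF / (2 * c * α) * L (F (g q)) ^ (1 - α)
      ≤ σ₀ * σF / (2 * c * α) * (c * α * ‖w‖) := by gcongr
    _ = σ₀ / 2 * (σF * ‖w‖) := by field_simp
    _ ≤ (σ₀ - ‖fderiv ℝ g q₀ - fderiv ℝ g q‖) * ‖adjoint (fderiv ℝ F (g q)) w‖ :=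
        mul_le_mul (by linarith) hF_inj (by positivity) (by linarith)
    _ ≤ ‖gradient (fun q => L (F (g q))) q‖ := hgrad ▸ sigmaMin_sub_norm_sub_mul_norm_le _ _ _

theorem stmt10_general
    {n m p : ℕ}
    (L : EuclideanSpace ℝ (Fin m) → ℝ)
    (F : EuclideanSpace ℝ (Fin n) → EuclideanSpace ℝ (Fin m))
    (g : EuclideanSpace ℝ (Fin p) → EuclideanSpace ℝ (Fin n))
    (hL : ContDiff ℝ 1 L)
    (hLnonneg : ∀ v, 0 ≤ L v)
    (hF : ContDiff ℝ 1 F)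
    (hg : ContDiff ℝ 1 g)
    (θ θ' : ℝ → EuclideanSpace ℝ (Fin p)) (θ₀ : EuclideanSpace ℝ (Fin p))
    (hθ0 : θ 0 = θ₀)
    (hθd : ∀ t ≥ (0:ℝ), HasDerivAt θ (θ' t) t)
    (hflow : ∀ t ≥ (0:ℝ), θ' t = -gradient (fun q => L (F (g q))) (θ t))
    (c α : ℝ) (hc : 0 < c) (hα : α ∈ Set.Ioo (0:ℝ) (1/2))
    (r₀ : ℝ) (hr₀ : L (F (g (θ 0))) < r₀)
    (hKL : ∀ v : EuclideanSpace ℝ (Fin m), 0 < L v → L v < r₀ →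
      1 ≤ c * α * L v ^ (α - 1) * ‖gradient L v‖)
    (σF : ℝ) (hσF : 0 < σF)
    (σ₀ : ℝ) (hσ₀ : σ₀ = sigmaMin (fderiv ℝ g θ₀)) (hσ₀pos : 0 < σ₀)
    (R : ℝ) (hRpos : 0 < R)
    (hinj : ∀ q ∈ Metric.closedBall θ₀ R,
      gradient L (F (g q)) ∈ LinearMap.range (fderiv ℝ F (g q) : EuclideanSpace ℝ (Fin n) →ₗ[ℝ] EuclideanSpace ℝ (Fin m)) ∧
      ∀ z ∈ LinearMap.range (fderiv ℝ F (g q) : EuclideanSpace ℝ (Fin n) →ₗ[ℝ] EuclideanSpace ℝ (Fin m)),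
        σF * ‖z‖ ≤ ‖ContinuousLinearMap.adjoint (fderiv ℝ F (g q)) z‖)
    (hLip : ∀ a ∈ Metric.closedBall θ₀ R, ∀ b ∈ Metric.closedBall θ₀ R,
      ‖fderiv ℝ g a - fderiv ℝ g b‖ ≤ σ₀ / (2 * R) * ‖a - b‖)
    (hRR : 2 / (σF * σ₀) * (c * L (F (g θ₀)) ^ α) < R)
    (hL0pos : 0 < L (F (g (θ 0))))
    (γ : ℝ → ℝ)
    (hγ : ∀ t, γ t = σF ^ 2 * σ₀ ^ 2 / 4 * t +
      c ^ 2 * α ^ 2 / (1 - 2 * α) * L (F (g (θ 0))) ^ (2 * α - 1)) :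
    (∀ t ≥ (0:ℝ), 0 < γ t) ∧
    ∃ θlim : EuclideanSpace ℝ (Fin p), Tendsto θ atTop (𝓝 θlim) ∧
      ∀ t ≥ (0:ℝ),
        L (F (g (θ t))) ≤ ((1 - 2 * α) / (α ^ 2 * c ^ 2) * γ t) ^ (-(1 / (1 - 2 * α))) ∧
        ‖θ t - θlim‖ ≤ 2 * c / (σ₀ * σF) *
          ((1 - 2 * α) / (α ^ 2 * c ^ 2) * γ t) ^ (-(α / (1 - 2 * α))) := by
  obtain ⟨hα₀, hα⟩ := hα
  have h2α : 0 < 1 - 2 * α := by linarith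
  set κ := σ₀ * σF / (2 * c * α) with hκ_def
  have hκ : 0 < κ := by positivity
  have hcurve : IsDissipativeCurve θ θ' (fun t => L (F (g (θ t)))) :=
    IsDissipativeCurve.of_gradient_flow ((hL.comp (hF.comp hg)).differentiable one_ne_zero)
      (fun _ => hLnonneg _) hθd hflow
  have hŁ_ball : ∀ t ≥ 0, θ t ∈ closedBall (θ 0) R → 0 < L (F (g (θ t))) →
      κ * L (F (g (θ t))) ^ (1 - α) ≤ ‖θ' t‖ := fun t ht hq hpos => by
    rw [hflow t ht, norm_neg, hκ_def, hσ₀]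
    exact mul_rpow_le_norm_gradient_comp_of_mem_closedBall (hL.differentiable one_ne_zero)
      (hF.differentiable one_ne_zero) (hg.differentiable one_ne_zero) hc hα₀ hσF.le hRpos hKL
      hinj (hσ₀ ▸ hLip) (hθ0 ▸ hq) hpos ((hcurve.antitoneOn self_mem_Ici ht ht).trans_lt hr₀)
  have hR : (κ * α)⁻¹ * L (F (g (θ 0))) ^ α < R := by
    convert hRR using 1
    rw [hθ0, hκ_def]
    field_simp
  have hŁ : ∀ t ≥ 0, 0 < L (F (g (θ t))) → κ * L (F (g (θ t))) ^ (1 - α) ≤ ‖θ' t‖ :=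
    fun t ht => hŁ_ball t ht (hcurve.mem_closedBall_of_lojasiewicz hκ hα₀ hŁ_ball hR ht)
  have hX : ∀ t, (1 - 2 * α) / (α ^ 2 * c ^ 2) * γ t =
      L (F (g (θ 0))) ^ (2 * α - 1) + (1 - 2 * α) * κ ^ 2 * t := fun t => by
    rw [hγ, hκ_def]
    field_simp
    ring
  obtain ⟨θlim, hlim, hdist⟩ := hcurve.exists_tendsto_of_lojasiewicz hκ hα₀ hα hŁ
  refine ⟨fun t ht => ?_, θlim, hlim, fun t ht => ?_⟩
  · rw [hγ]
    have := mul_pos (div_pos (by positivity : (0 : ℝ) < c ^ 2 * α ^ 2) h2α)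
      (Real.rpow_pos_of_pos hL0pos (2 * α - 1))
    linarith [mul_nonneg (by positivity : (0 : ℝ) ≤ σF ^ 2 * σ₀ ^ 2 / 4) ht]
  · rw [hX]
    refine ⟨hcurve.energy_le_of_lojasiewicz hκ hα hŁ ht, (hdist t ht).trans_eq ?_⟩
    rw [hκ_def]
    field_simp

theorem stmt10
    {n m p : ℕ} (hn : 0 < n) (hm : 0 < m) (hp : 0 < p)
    (L : EuclideanSpace ℝ (Fin m) → ℝ)
    (F : EuclideanSpace ℝ (Fin n) → EuclideanSpace ℝ (Fin m))
    (g : EuclideanSpace ℝ (Fin p) → EuclideanSpace ℝ (Fin n))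
    (hL : ContDiff ℝ 1 L)
    (hLnonneg : ∀ v, 0 ≤ L v) (hLmin : ∃ v, L v = 0)
    (hLgrad : ∀ s : Set (EuclideanSpace ℝ (Fin m)), Bornology.IsBounded s →
      ∃ K : ℝ≥0, LipschitzOnWith K (fun v => gradient L v) s)
    (hF : ContDiff ℝ 1 F)
    (hJF : ∀ s : Set (EuclideanSpace ℝ (Fin n)), Bornology.IsBounded s →
      ∃ K : ℝ≥0, LipschitzOnWith K (fun x => fderiv ℝ F x) s)
    (hg : ContDiff ℝ 1 g)
    (hJg : ∀ s : Set (EuclideanSpace ℝ (Fin p)), Bornology.IsBounded s →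
      ∃ K : ℝ≥0, LipschitzOnWith K (fun q => fderiv ℝ g q) s)
    (θ θ' : ℝ → EuclideanSpace ℝ (Fin p)) (θ₀ : EuclideanSpace ℝ (Fin p))
    (hθ0 : θ 0 = θ₀)
    (hθd : ∀ t ≥ (0:ℝ), HasDerivAt θ (θ' t) t)
    (hθcont : ContinuousOn θ' (Set.Ici 0))
    (hflow : ∀ t ≥ (0:ℝ), θ' t = -gradient (fun q => L (F (g q))) (θ t))
    (c α : ℝ) (hc : 0 < c) (hα : α ∈ Set.Ioo (0:ℝ) (1/2))
    (r₀ : ℝ) (hr₀ : L (F (g (θ 0))) < r₀)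
    (hKL : ∀ v : EuclideanSpace ℝ (Fin m), 0 < L v → L v < r₀ →
      1 ≤ c * α * L v ^ (α - 1) * ‖gradient L v‖)
    (σF : ℝ) (hσF : 0 < σF)
    (σ₀ : ℝ) (hσ₀ : σ₀ = sigmaMin (fderiv ℝ g θ₀)) (hσ₀pos : 0 < σ₀)
    (R : ℝ) (hRpos : 0 < R)
    (hinj : ∀ q ∈ Metric.closedBall θ₀ R,
      gradient L (F (g q)) ∈ LinearMap.range (fderiv ℝ F (g q) : EuclideanSpace ℝ (Fin n) →ₗ[ℝ] EuclideanSpace ℝ (Fin m)) ∧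
      ∀ z ∈ LinearMap.range (fderiv ℝ F (g q) : EuclideanSpace ℝ (Fin n) →ₗ[ℝ] EuclideanSpace ℝ (Fin m)),
        σF * ‖z‖ ≤ ‖ContinuousLinearMap.adjoint (fderiv ℝ F (g q)) z‖)
    (hLip : ∀ a ∈ Metric.closedBall θ₀ R, ∀ b ∈ Metric.closedBall θ₀ R,
      ‖fderiv ℝ g a - fderiv ℝ g b‖ ≤ σ₀ / (2 * R) * ‖a - b‖)
    (hRR : 2 / (σF * σ₀) * (c * L (F (g θ₀)) ^ α) < R)
    (hL0pos : 0 < L (F (g (θ 0))))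
    (γ : ℝ → ℝ)
    (hγ : ∀ t, γ t = σF ^ 2 * σ₀ ^ 2 / 4 * t +
      c ^ 2 * α ^ 2 / (1 - 2 * α) * L (F (g (θ 0))) ^ (2 * α - 1)) :
    (∀ t ≥ (0:ℝ), 0 < γ t) ∧
    ∃ θlim : EuclideanSpace ℝ (Fin p), Tendsto θ atTop (𝓝 θlim) ∧
      ∀ t ≥ (0:ℝ),
        L (F (g (θ t))) ≤ ((1 - 2 * α) / (α ^ 2 * c ^ 2) * γ t) ^ (-(1 / (1 - 2 * α))) ∧
        ‖θ t - θlim‖ ≤ 2 * c / (σ₀ * σF) *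
          ((1 - 2 * α) / (α ^ 2 * c ^ 2) * γ t) ^ (-(α / (1 - 2 * α))) :=
  stmt10_general L F g hL hLnonneg hF hg θ θ' θ₀ hθ0 hθd hflow c α hc hα r₀ hr₀ hKL σF hσF σ₀ hσ₀
    hσ₀pos R hRpos hinj hLip hRR hL0pos γ hγ
end

section
/- (Local Lipschitz constant of the Jacobian, both layers trained.) Let D > 0 and let θ₀ = (V₀, W₀) be a parameter whose matrix V₀ has every column of Euclidean norm at most D·√n. If n ≥ 2, then for every ρ > 0 and all parameters θ, θ̃ in the closed ball of radius ρ around θ₀ (in the Frobenius norm on parameter space): ‖J_g(θ) − J_g(θ̃)‖ ≤ B·(1 + 2(D + ρ))·√(n/k)·‖θ − θ̃‖. -/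
open MeasureTheory ProbabilityTheory Filter
open scoped Topology NNReal

/-- The two-layer DIP network `g(V, W) = (1/√k) V φ(W u)`, with the parameters `(V, W)`
encoded as a single Euclidean (Frobenius) vector. -/
noncomputable def dipNet (n k d : ℕ) (φ : ℝ → ℝ) (u : EuclideanSpace ℝ (Fin d))
    (θ : EuclideanSpace ℝ ((Fin n × Fin k) ⊕ (Fin k × Fin d))) : EuclideanSpace ℝ (Fin n) :=
  WithLp.toLp 2 (fun i => (1 / Real.sqrt k) *
    ∑ j : Fin k, θ (Sum.inl (i, j)) * φ (∑ l : Fin d, θ (Sum.inr (j, l)) * u l))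

/-- The two-layer DIP network with the linear layer `V` fixed. -/
noncomputable def dipNetW (n k d : ℕ) (φ : ℝ → ℝ) (u : EuclideanSpace ℝ (Fin d))
    (V : Matrix (Fin n) (Fin k) ℝ) (W : EuclideanSpace ℝ (Fin k × Fin d)) :
    EuclideanSpace ℝ (Fin n) :=
  WithLp.toLp 2 (fun i => (1 / Real.sqrt k) *
    ∑ j : Fin k, V i j * φ (∑ l : Fin d, W (j, l) * u l))

/-- Supremum norm on a Euclidean space. -/
noncomputable def supNorm {m : ℕ} (v : EuclideanSpace ℝ (Fin m)) : ℝ := ⨆ i, |v i|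


/-!
Write `θ = (V, W)`, `h = (H, E)` and `s = W u`. The Jacobian sends `h` to
`(1/√k) (V diag φ'(s) E u + H φ(s))`, so the difference of the Jacobians at `a` and `b` regroups
into three matrix-vector products, `H (φ(s_a) - φ(s_b))`, `(V_a - V_b) (φ'(s_a) ⊙ E u)` and
`(V_b diag(E u)) (φ'(s_a) - φ'(s_b))`. Each is at most a Frobenius norm times a Euclidean norm,
`φ` and `φ'` are `B`-Lipschitz, and the Frobenius norm of `V_b diag(E u)` is controlled by the
column norms of `V_b`, which exceed those of `V₀` by at most `ρ`. In the code the blocks `V`, `W`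
of `θ` are `θ.restrict Sum.inl`, `θ.restrict Sum.inr`, and `s = dipPreact u θ`.
-/

open Finset Function

namespace EuclideanSpace

variable {ι κ : Type*}

noncomputable def restrict (x : EuclideanSpace ℝ ι) (f : κ → ι) : EuclideanSpace ℝ κ :=
  WithLp.toLp 2 fun j => x (f j)

@[simp]
lemma restrict_apply (x : EuclideanSpace ℝ ι) (f : κ → ι) (j : κ) : x.restrict f j = x (f j) :=
  rfl

lemma restrict_sub (x y : EuclideanSpace ℝ ι) (f : κ → ι) :
    (x - y).restrict f = x.restrict f - y.restrict f :=
  rfl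

variable [Fintype ι] [Fintype κ]

lemma norm_restrict_le (x : EuclideanSpace ℝ ι) {f : κ → ι} (hf : Injective f) :
    ‖x.restrict f‖ ≤ ‖x‖ := by
  refine le_of_sq_le_sq ?_ (norm_nonneg x)
  calc ‖x.restrict f‖ ^ 2 = ∑ i ∈ univ.map ⟨f, hf⟩, x i ^ 2 := by
        rw [real_norm_sq_eq, sum_map]; rfl
    _ ≤ ‖x‖ ^ 2 := by
        rw [real_norm_sq_eq]
        exact sum_le_sum_of_subset_of_nonneg (subset_univ _) fun i _ _ => sq_nonneg _

lemma norm_restrict_le_add_dist (x y : EuclideanSpace ℝ ι) {f : κ → ι} (hf : Injective f) :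
    ‖x.restrict f‖ ≤ ‖y.restrict f‖ + dist x y := by
  calc ‖x.restrict f‖ = ‖y.restrict f + (x - y).restrict f‖ := by
        rw [restrict_sub, add_sub_cancel]
    _ ≤ ‖y.restrict f‖ + dist x y := by
        rw [dist_eq_norm]
        exact (norm_add_le _ _).trans (by gcongr; exact norm_restrict_le _ hf)

lemma norm_sq_eq_norm_restrict_inl_sq_add (x : EuclideanSpace ℝ (ι ⊕ κ)) :
    ‖x‖ ^ 2 = ‖x.restrict Sum.inl‖ ^ 2 + ‖x.restrict Sum.inr‖ ^ 2 := by
  simp [real_norm_sq_eq, Fintype.sum_sum_type]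

lemma norm_restrict_inl_mul_add_le (x y : EuclideanSpace ℝ (ι ⊕ κ)) :
    ‖x.restrict Sum.inl‖ * ‖y.restrict Sum.inr‖ + ‖y.restrict Sum.inl‖ * ‖x.restrict Sum.inr‖ ≤
      ‖x‖ * ‖y‖ := by
  have hx := norm_sq_eq_norm_restrict_inl_sq_add x
  have hy := norm_sq_eq_norm_restrict_inl_sq_add y
  refine abs_le_of_sq_le_sq' ?_ (by positivity) |>.2
  nlinarith [sq_nonneg (‖x.restrict Sum.inl‖ * ‖y.restrict Sum.inl‖ -
    ‖x.restrict Sum.inr‖ * ‖y.restrict Sum.inr‖)]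

lemma norm_le_mul_of_abs_le {x y : EuclideanSpace ℝ ι} {c : ℝ} (hc : 0 ≤ c)
    (h : ∀ i, |x i| ≤ c * |y i|) : ‖x‖ ≤ c * ‖y‖ := by
  refine le_of_sq_le_sq ?_ (by positivity)
  rw [mul_pow, real_norm_sq_eq, real_norm_sq_eq, mul_sum]
  gcongr with i
  simpa [mul_pow] using pow_le_pow_left₀ (abs_nonneg _) (h i) 2

lemma norm_map_sub_map_le {f : ℝ → ℝ} {c : ℝ} (hc : 0 ≤ c)
    (hf : ∀ s t, |f s - f t| ≤ c * |s - t|) (x y : EuclideanSpace ℝ ι) :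
    ‖(WithLp.toLp 2 fun i => f (x i) - f (y i) : EuclideanSpace ℝ ι)‖ ≤ c * ‖x - y‖ :=
  norm_le_mul_of_abs_le hc fun i => hf (x i) (y i)

lemma norm_sum_mul_le (M : EuclideanSpace ℝ (ι × κ)) (y : EuclideanSpace ℝ κ) :
    ‖(WithLp.toLp 2 fun i => ∑ j, M (i, j) * y j : EuclideanSpace ℝ ι)‖ ≤ ‖M‖ * ‖y‖ := by
  refine le_of_sq_le_sq ?_ (by positivity)
  rw [mul_pow, real_norm_sq_eq, real_norm_sq_eq, real_norm_sq_eq, Fintype.sum_prod_type, sum_mul]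
  gcongr with i
  exact sum_mul_sq_le_sq_mul_sq _ _ _

lemma norm_mul_apply_snd_le (M : EuclideanSpace ℝ (ι × κ)) (y : EuclideanSpace ℝ κ) {c : ℝ}
    (hc₀ : 0 ≤ c) (hc : ∀ j, ‖M.restrict (·, j)‖ ≤ c) :
    ‖(WithLp.toLp 2 fun p : ι × κ => M p * y p.2 : EuclideanSpace ℝ (ι × κ))‖ ≤ c * ‖y‖ := by
  refine le_of_sq_le_sq ?_ (by positivity)
  rw [mul_pow, real_norm_sq_eq, real_norm_sq_eq, Fintype.sum_prod_type_right, mul_sum]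
  gcongr with j
  simp_rw [mul_pow, ← sum_mul]
  gcongr
  simpa [real_norm_sq_eq] using pow_le_pow_left₀ (norm_nonneg _) (hc j) 2

end EuclideanSpace

section DipNet

variable {n k d : ℕ} (φ : ℝ → ℝ) (u : EuclideanSpace ℝ (Fin d))

local notation "Θ" => EuclideanSpace ℝ ((Fin n × Fin k) ⊕ (Fin k × Fin d))

noncomputable def dipPreact : Θ →L[ℝ] EuclideanSpace ℝ (Fin k) :=
  (PiLp.continuousLinearEquiv 2 ℝ fun _ : Fin k => ℝ).symm.toContinuousLinearMap ∘L
    ContinuousLinearMap.pi fun j => ∑ l, u l • EuclideanSpace.proj (Sum.inr (j, l))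

lemma dipPreact_apply (θ : Θ) (j : Fin k) :
    dipPreact u θ j = ∑ l, θ (Sum.inr (j, l)) * u l := by
  simp [dipPreact, mul_comm]

lemma norm_dipPreact_le (θ : Θ) : ‖dipPreact u θ‖ ≤ ‖θ.restrict Sum.inr‖ * ‖u‖ := by
  simpa [← dipPreact_apply] using EuclideanSpace.norm_sum_mul_le (θ.restrict Sum.inr) u

lemma hasFDerivAt_dipNet_apply (hφ : Differentiable ℝ φ) (θ : Θ) (i : Fin n) :
    HasFDerivAt (fun θ' => dipNet n k d φ u θ' i)
      ((1 / Real.sqrt k) • ∑ j, (θ (Sum.inl (i, j)) • deriv φ (dipPreact u θ j) •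
          (EuclideanSpace.proj j ∘L dipPreact u) +
        φ (dipPreact u θ j) • EuclideanSpace.proj (Sum.inl (i, j)))) θ := by
  simp only [dipNet, ← dipPreact_apply]
  refine HasFDerivAt.const_mul (HasFDerivAt.fun_sum fun j _ => ?_) _
  exact (PiLp.hasFDerivAt_apply _ θ _).mul ((hφ _).hasDerivAt.comp_hasFDerivAt θ
    (EuclideanSpace.proj j ∘L dipPreact u).hasFDerivAt)

lemma fderiv_dipNet_apply (hφ : Differentiable ℝ φ) (θ h : Θ) (i : Fin n) :
    fderiv ℝ (dipNet n k d φ u) θ h i = (1 / Real.sqrt k) * ∑ j,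
      (θ (Sum.inl (i, j)) * deriv φ (dipPreact u θ j) * dipPreact u h j +
        φ (dipPreact u θ j) * h (Sum.inl (i, j))) := by
  have hdiff : DifferentiableAt ℝ (dipNet n k d φ u) θ :=
    (differentiableAt_piLp 2).2 fun i => (hasFDerivAt_dipNet_apply φ u hφ θ i).differentiableAt
  have hcoord := (PiLp.hasFDerivAt_apply 2 _ i).comp θ hdiff.hasFDerivAt
  have := congrArg (· h) (hcoord.unique (hasFDerivAt_dipNet_apply φ u hφ θ i))
  simpa [mul_assoc] using this

lemma fderiv_dipNet_sub_apply (hφ : Differentiable ℝ φ) (a b h : Θ) :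
    (fderiv ℝ (dipNet n k d φ u) a - fderiv ℝ (dipNet n k d φ u) b) h =
      (1 / Real.sqrt k) • (WithLp.toLp 2 (fun i => ∑ j, h.restrict Sum.inl (i, j) *
          (φ (dipPreact u a j) - φ (dipPreact u b j))) +
        WithLp.toLp 2 (fun i => ∑ j, (a - b).restrict Sum.inl (i, j) *
          (deriv φ (dipPreact u a j) * dipPreact u h j)) +
        WithLp.toLp 2 (fun i => ∑ j, (b.restrict Sum.inl (i, j) * dipPreact u h j) *
          (deriv φ (dipPreact u a j) - deriv φ (dipPreact u b j)))) := by
  ext i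
  simp only [_root_.sub_apply, PiLp.sub_apply, PiLp.smul_apply, PiLp.add_apply,
    fderiv_dipNet_apply φ u hφ, smul_eq_mul, EuclideanSpace.restrict_apply]
  rw [← mul_sub, ← sum_sub_distrib, ← sum_add_distrib, ← sum_add_distrib]
  congr 1
  exact sum_congr rfl fun j _ => by ring

variable {φ u} {B : ℝ} (hφ : Differentiable ℝ φ) (hφB : ∀ x, |deriv φ x| ≤ B)
  (hφlip : ∀ x y, |deriv φ x - deriv φ y| ≤ B * |x - y|) (hu : ‖u‖ ≤ 1)
include hφ hφB hφlip hu

lemma norm_fderiv_dipNet_sub_apply_le (a b h : Θ) {c : ℝ} (hc₀ : 0 ≤ c)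
    (hc : ∀ j, ‖(b.restrict Sum.inl).restrict (·, j)‖ ≤ c) :
    ‖(fderiv ℝ (dipNet n k d φ u) a - fderiv ℝ (dipNet n k d φ u) b) h‖ ≤
      1 / √k * (B * (‖h.restrict Sum.inl‖ * ‖(a - b).restrict Sum.inr‖ +
        ‖(a - b).restrict Sum.inl‖ * ‖h.restrict Sum.inr‖ +
        c * (‖h.restrict Sum.inr‖ * ‖(a - b).restrict Sum.inr‖))) := by
  have hB : 0 ≤ B := (abs_nonneg _).trans (hφB 0)
  have hφLip : ∀ x y, |φ x - φ y| ≤ B * |x - y| := fun x y => by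
    simpa using convex_univ.norm_image_sub_le_of_norm_deriv_le (fun z _ => hφ z)
      (fun z _ => hφB z) (Set.mem_univ y) (Set.mem_univ x)
  set s := dipPreact u
  have hs : ∀ θ : Θ, ‖s θ‖ ≤ ‖θ.restrict Sum.inr‖ := fun θ =>
    (norm_dipPreact_le u θ).trans (mul_le_of_le_one_right (norm_nonneg _) hu)
  have hΔs : B * ‖s a - s b‖ ≤ B * ‖(a - b).restrict Sum.inr‖ := by
    rw [← map_sub]; gcongr; exact hs _
  have h₁ := (EuclideanSpace.norm_sum_mul_le (h.restrict Sum.inl)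
    (WithLp.toLp 2 fun j => φ (s a j) - φ (s b j))).trans
      (mul_le_mul_of_nonneg_left ((EuclideanSpace.norm_map_sub_map_le hB hφLip _ _).trans hΔs)
        (norm_nonneg _))
  have h₂ := (EuclideanSpace.norm_sum_mul_le ((a - b).restrict Sum.inl)
    (WithLp.toLp 2 fun j => deriv φ (s a j) * s h j)).trans
      (mul_le_mul_of_nonneg_left ((EuclideanSpace.norm_le_mul_of_abs_le hB (y := s h) fun j => by
          simpa [abs_mul] using mul_le_mul_of_nonneg_right (hφB (s a j)) (abs_nonneg (s h j))).trans
        (mul_le_mul_of_nonneg_left (hs h) hB)) (norm_nonneg _))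
  have h₃ := (EuclideanSpace.norm_sum_mul_le
    (WithLp.toLp 2 fun p => b.restrict Sum.inl p * s h p.2)
    (WithLp.toLp 2 fun j => deriv φ (s a j) - deriv φ (s b j))).trans
      (mul_le_mul ((EuclideanSpace.norm_mul_apply_snd_le _ _ hc₀ hc).trans
          (mul_le_mul_of_nonneg_left (hs h) hc₀))
        ((EuclideanSpace.norm_map_sub_map_le hB hφlip _ _).trans hΔs) (norm_nonneg _)
        (by positivity))
  rw [fderiv_dipNet_sub_apply φ u hφ, norm_smul, Real.norm_of_nonneg (by positivity)]
  gcongr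
  refine norm_add₃_le.trans ?_
  linarith

lemma norm_fderiv_dipNet_sub_le (a b : Θ) {c : ℝ} (hc₀ : 0 ≤ c)
    (hc : ∀ j, ‖(b.restrict Sum.inl).restrict (·, j)‖ ≤ c) :
    ‖fderiv ℝ (dipNet n k d φ u) a - fderiv ℝ (dipNet n k d φ u) b‖ ≤
      B * (1 + c) / √k * ‖a - b‖ := by
  have hB : 0 ≤ B := (abs_nonneg _).trans (hφB 0)
  refine ContinuousLinearMap.opNorm_le_bound _ (by positivity) fun h => ?_
  have hcross := EuclideanSpace.norm_restrict_inl_mul_add_le h (a - b)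
  have hinr : ‖h.restrict Sum.inr‖ * ‖(a - b).restrict Sum.inr‖ ≤ ‖h‖ * ‖a - b‖ := by
    gcongr <;> exact EuclideanSpace.norm_restrict_le _ Sum.inr_injective
  calc _ ≤ _ := norm_fderiv_dipNet_sub_apply_le hφ hφB hφlip hu a b h hc₀ hc
    _ ≤ 1 / √k * (B * (‖h‖ * ‖a - b‖ + c * (‖h‖ * ‖a - b‖))) := by gcongr
    _ = B * (1 + c) / √k * ‖a - b‖ * ‖h‖ := by ring

end DipNet

theorem stmt16_general (n k d : ℕ) (hn : 2 ≤ n)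
    (B D : ℝ) (hD : 0 < D)
    (φ : ℝ → ℝ) (hφ : ContDiff ℝ 1 φ)
    (hφB : ∀ x, |deriv φ x| ≤ B)
    (hφlip : ∀ x y, |deriv φ x - deriv φ y| ≤ B * |x - y|)
    (u : EuclideanSpace ℝ (Fin d)) (hu : ‖u‖ = 1)
    (θ₀ : EuclideanSpace ℝ ((Fin n × Fin k) ⊕ (Fin k × Fin d)))
    (hV₀col : ∀ j : Fin k,
      Real.sqrt (∑ i : Fin n, θ₀ (Sum.inl (i, j)) ^ 2) ≤ D * Real.sqrt n) :
    ∀ ρ : ℝ, 0 < ρ →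
      ∀ a ∈ Metric.closedBall θ₀ ρ, ∀ b ∈ Metric.closedBall θ₀ ρ,
        ‖fderiv ℝ (dipNet n k d φ u) a - fderiv ℝ (dipNet n k d φ u) b‖ ≤
          B * (1 + 2 * (D + ρ)) * Real.sqrt ((n : ℝ) / k) * ‖a - b‖ := by
  intro ρ hρ a _ b hb
  have hcol : ∀ j, ‖(b.restrict Sum.inl).restrict (·, j)‖ ≤ D * √n + ρ := fun j =>
    (EuclideanSpace.norm_restrict_le_add_dist b θ₀ (f := fun i => Sum.inl (i, j))
      fun _ _ h => by simpa using h).trans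
      (add_le_add (by simpa [EuclideanSpace.norm_eq] using hV₀col j) hb)
  have hB : 0 ≤ B := (abs_nonneg _).trans (hφB 0)
  have hsqrt_n : 1 ≤ √(n : ℝ) := Real.one_le_sqrt.2 (by exact_mod_cast one_le_two.trans hn)
  refine (norm_fderiv_dipNet_sub_le (hφ.differentiable one_ne_zero) hφB hφlip hu.le a b
    (by positivity) hcol).trans ?_
  have hconst : 1 + (D * √n + ρ) ≤ (1 + 2 * (D + ρ)) * √n := by nlinarith
  calc B * (1 + (D * √n + ρ)) / √k * ‖a - b‖
      ≤ B * ((1 + 2 * (D + ρ)) * √n) / √k * ‖a - b‖ := by gcongr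
    _ = B * (1 + 2 * (D + ρ)) * √(n / k) * ‖a - b‖ := by
        rw [Real.sqrt_div' _ (Nat.cast_nonneg k)]; ring

theorem stmt16 (n k d : ℕ) (hn : 2 ≤ n) (hk : 0 < k)
    (B D : ℝ) (hB : 0 < B) (hD : 0 < D)
    (φ : ℝ → ℝ) (hφ : ContDiff ℝ 1 φ)
    (hφB : ∀ x, |deriv φ x| ≤ B)
    (hφlip : ∀ x y, |deriv φ x - deriv φ y| ≤ B * |x - y|)
    (u : EuclideanSpace ℝ (Fin d)) (hu : ‖u‖ = 1)
    (θ₀ : EuclideanSpace ℝ ((Fin n × Fin k) ⊕ (Fin k × Fin d)))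
    (hV₀col : ∀ j : Fin k,
      Real.sqrt (∑ i : Fin n, θ₀ (Sum.inl (i, j)) ^ 2) ≤ D * Real.sqrt n) :
    ∀ ρ : ℝ, 0 < ρ →
      ∀ a ∈ Metric.closedBall θ₀ ρ, ∀ b ∈ Metric.closedBall θ₀ ρ,
        ‖fderiv ℝ (dipNet n k d φ u) a - fderiv ℝ (dipNet n k d φ u) b‖ ≤
          B * (1 + 2 * (D + ρ)) * Real.sqrt ((n : ℝ) / k) * ‖a - b‖ :=
  stmt16_general n k d hn B D hD φ hφ hφB hφlip u hu θ₀ hV₀col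
end
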